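/- Fix a finite nonempty alphabet Σ equipped with a linear order, and let Ξ := Σ ⊕ Σ'' ⊕ Sym with φ : FL_Σ → Ξ* the canonical encoding. Define the traces relation trace_Σ ⊆ FL_Σ × Σ*, relating the observation ⟨A₀,a₁,A₁,…,aₙ,Aₙ⟩ to the word a₁a₂…aₙ. Then: (a) there exists a nondeterministic finite automaton with finitely many states over the alphabet Ξ ⊕ Σ recognising the relation {(φ(x), t) : (x, t) ∈ trace_Σ}; and (b) the identity encoding ψ : Σ* → Σ* is order-reflecting, i.e. whenever s is a prefix of t then s ≼ t, where ≼ is the relation on Σ* induced by trace_Σ from the extension order on FL_Σ. -/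

import Mathlib

/-- A finite linear observation over alphabet `α`: an initial annotation `A₀`
(`none` = `•`, `some A` = a stable acceptance set) together with a list of pairs
`(aᵢ, Aᵢ)` of an event and the following annotation. -/
abbrev FLObs (α : Type) := Option (Finset α) × List (α × Option (Finset α))

/-- Extension on annotations: either they are equal or the first is `•`. -/
def optExt {α : Type} (A B : Option (Finset α)) : Prop := A = B ∨ A = none

/-- The extension order on finite linear observations. -/
def extLE {α : Type} (u v : FLObs α) : Prop :=
  optExt u.1 v.1 ∧ u.2.length ≤ v.2.length ∧
    ∀ (i : ℕ) (hi : i < u.2.length) (hj : i < v.2.length),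
      (u.2.get ⟨i, hi⟩).1 = (v.2.get ⟨i, hj⟩).1 ∧
        optExt (u.2.get ⟨i, hi⟩).2 (v.2.get ⟨i, hj⟩).2

/-- The four symbols `⟨`, `⟩`, `,`, `•` used by the canonical encoding. -/
inductive MSym : Type
  | lang | rang | comma | bullet
deriving DecidableEq

instance : Fintype MSym where
  elems := {MSym.lang, MSym.rang, MSym.comma, MSym.bullet}
  complete := by intro x; cases x <;> simp

/-- The alphabet `Ξ = Σ ⊕ Σ'' ⊕ MSym` of the canonical encoding: `Sum.inl a` is the
event `a`, `Sum.inr (Sum.inl a)` is the double-primed copy `a''`, and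
`Sum.inr (Sum.inr s)` is a symbol. -/
abbrev Xi (α : Type) := α ⊕ α ⊕ MSym

/-- Encoding of an annotation: `•` is the symbol `•`, a set is the list of the
double-primed copies of its elements in increasing order. -/
def encAnnXi {α : Type} [LinearOrder α] : Option (Finset α) → List (Xi α)
  | none => [Sum.inr (Sum.inr MSym.bullet)]
  | some A => (A.sort (· ≤ ·)).map (fun a => Sum.inr (Sum.inl a))

/-- The canonical encoding `φ` of finite linear observations: the observation
`⟨A₀, a₁, A₁, …, aₙ, Aₙ⟩` is written as the string `⟨ A₀ , a₁ , A₁ , … , aₙ , Aₙ ⟩`. -/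
def phi {α : Type} [LinearOrder α] (u : FLObs α) : List (Xi α) :=
  [Sum.inr (Sum.inr MSym.lang)] ++ encAnnXi u.1 ++
    (u.2.map (fun p => [Sum.inr (Sum.inr MSym.comma), Sum.inl p.1,
      Sum.inr (Sum.inr MSym.comma)] ++ encAnnXi p.2)).flatten ++
    [Sum.inr (Sum.inr MSym.rang)]

/-- An NFA over `α ⊕ β` recognises a relation `R ⊆ α* × β*` if `R s t` holds exactly
when the NFA accepts some interleaving of `s` (as left letters) and `t` (as right
letters). -/
def Recognises {α β Q : Type} (A : NFA (α ⊕ β) Q) (R : List α → List β → Prop) : Prop :=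
  ∀ (s : List α) (t : List β),
    R s t ↔ ∃ w ∈ A.accepts, w.filterMap Sum.getLeft? = s ∧ w.filterMap Sum.getRight? = t

/-- The relation on `O` induced by a relation `M : S → O → Prop` from a preorder
`le` on `S`. -/
def inducedRel {S O : Type} (le : S → S → Prop) (M : S → O → Prop) (y₁ y₂ : O) : Prop :=
  ∀ b, M b y₂ → ∃ a, M a y₁ ∧ le a b

/-- The final annotation `Aₙ` of an observation. -/
def lastAnn {α : Type} (u : FLObs α) : Option (Finset α) :=
  match u.2.getLast? with
  | none => u.1
  | some p => p.2


/-- The traces relation: it relates `⟨A₀,a₁,A₁,…,aₙ,Aₙ⟩` to the word `a₁a₂…aₙ`. -/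
def traceRel {α : Type} (u : FLObs α) (t : List α) : Prop := t = u.2.map Prod.fst

/-! Interleave the canonical encoding `φ x` with the trace by writing each output letter `a`
right after the event `a`. The interleaved words form a regular language: a deterministic
automaton only has to remember where it is in the grammar `⟨ A , a a , A , … ⟩`, the last element
of the acceptance set being read (to check that sets are listed in increasing order), and the
event that must be echoed next. For (b), a prefix `s` of the trace of `v` is the trace of the
truncation of `v` to `|s|` events, and `v` extends that truncation. -/

namespace TracesRational

abbrev Letter (α : Type) := Xi α ⊕ α

variable {α : Type}

def sym (m : MSym) : Letter α := .inl (.inr (.inr m))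

def ev (a : α) : Letter α := .inl (.inl a)

def acc (a : α) : Letter α := .inl (.inr (.inl a))

section Encoding

variable [LinearOrder α]

def encAnn (B : Option (Finset α)) : List (Letter α) := (encAnnXi B).map Sum.inl

def encStep (p : α × Option (Finset α)) : List (Letter α) :=
  [sym .comma, ev p.1, .inr p.1, sym .comma] ++ encAnn p.2

def enc (x : FLObs α) : List (Letter α) :=
  sym .lang :: (encAnn x.1 ++ (x.2.map encStep).flatten ++ [sym .rang])

@[simp]
theorem filterMap_getLeft_encAnn (B : Option (Finset α)) :
    (encAnn B).filterMap Sum.getLeft? = encAnnXi B := by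
  simp [encAnn, List.filterMap_map, Function.comp_def]

@[simp]
theorem filterMap_getRight_encAnn (B : Option (Finset α)) :
    (encAnn B).filterMap Sum.getRight? = [] := by
  simp [encAnn, List.filterMap_map, Function.comp_def]

theorem filterMap_getLeft_enc (x : FLObs α) : (enc x).filterMap Sum.getLeft? = phi x := by
  simp [enc, phi, encStep, sym, ev, List.filterMap_cons, List.filterMap_flatten,
    Function.comp_def]

theorem filterMap_getRight_enc (x : FLObs α) :
    (enc x).filterMap Sum.getRight? = x.2.map Prod.fst := by
  simp only [enc, encStep, sym, ev, List.filterMap_cons, List.filterMap_append,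
    List.filterMap_flatten, List.map_map, Function.comp_def, Sum.getRight?_inl, Sum.getRight?_inr,
    filterMap_getRight_encAnn, List.filterMap_nil, List.nil_append, List.append_nil]
  exact (List.flatMap_def ..).symm.trans List.map_eq_flatMap.symm

end Encoding

section Automaton

variable [LinearOrder α]

/-- Interleaved encodings of `, a₁ a₁ , A₁ , … , aₙ aₙ , Aₙ ⟩`. -/
def RestEnc (w : List (Letter α)) : Prop :=
  ∃ L : List (α × Option (Finset α)), w = (L.map encStep).flatten ++ [sym .rang]

/-- `B` may be the annotation whose encoding continues after acceptance letters `≤ lo` have been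
read; `•` only if none have. -/
def Above (lo : WithBot α) : Option (Finset α) → Prop
  | none => lo = ⊥
  | some A => ∀ b ∈ A, lo < b

def AnnRestEnc (lo : WithBot α) (w : List (Letter α)) : Prop :=
  ∃ B, Above lo B ∧ ∃ w', w = encAnn B ++ w' ∧ RestEnc w'

theorem not_restEnc_nil : ¬ RestEnc ([] : List (Letter α)) := by
  rintro ⟨L, hL⟩
  simp at hL

theorem restEnc_cons (c : Letter α) (w : List (Letter α)) :
    RestEnc (c :: w) ↔ (c = sym .comma ∧ ∃ a w', w = ev a :: .inr a :: sym .comma :: w' ∧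
      AnnRestEnc ⊥ w') ∨ (c = sym .rang ∧ w = []) := by
  constructor
  · rintro ⟨_ | ⟨⟨a, B⟩, L⟩, hL⟩
    · simp_all
    · simp only [List.map_cons, List.flatten_cons, encStep, List.cons_append, List.append_assoc,
        List.nil_append, List.cons.injEq] at hL
      obtain ⟨rfl, rfl⟩ := hL
      exact Or.inl ⟨rfl, a, _, rfl, B, by cases B <;> simp [Above], _, rfl, L, rfl⟩
  · rintro (⟨rfl, a, w', rfl, B, -, w'', rfl, L, rfl⟩ | ⟨rfl, rfl⟩)
    · exact ⟨(a, B) :: L, by simp [encStep]⟩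
    · exact ⟨[], rfl⟩

theorem not_annRestEnc_nil (lo : WithBot α) : ¬ AnnRestEnc lo ([] : List (Letter α)) := by
  rintro ⟨B, -, w', hw, hw'⟩
  exact not_restEnc_nil ((List.append_eq_nil_iff.mp hw.symm).2 ▸ hw')

theorem encAnn_insert {a : α} {A : Finset α} (h : ∀ b ∈ A, a < b) :
    encAnn (some (insert a A)) = acc a :: encAnn (some A) := by
  have ha : a ∉ A := fun hm => lt_irrefl a (h a hm)
  simp [encAnn, encAnnXi, Finset.sort_insert (· ≤ ·) (fun b hb => (h b hb).le) ha, acc]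

theorem annRestEnc_cons (lo : WithBot α) (c : Letter α) (w : List (Letter α)) :
    AnnRestEnc lo (c :: w) ↔ (lo = ⊥ ∧ c = sym .bullet ∧ RestEnc w) ∨
      (∃ a : α, c = acc a ∧ lo < a ∧ AnnRestEnc a w) ∨ RestEnc (c :: w) := by
  constructor
  · rintro ⟨_ | A, hB, w', hw, hw'⟩
    · simp only [encAnn, encAnnXi, List.map_cons, List.map_nil, List.cons_append,
        List.nil_append, List.cons.injEq] at hw
      obtain ⟨rfl, rfl⟩ := hw
      exact Or.inl ⟨hB, rfl, hw'⟩
    · induction A using Finset.induction_on_min with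
      | empty =>
        simp only [encAnn, encAnnXi, Finset.sort_empty, List.map_nil, List.nil_append] at hw
        exact Or.inr (Or.inr (hw ▸ hw'))
      | insert a A hA _ =>
        rw [encAnn_insert hA, List.cons_append, List.cons.injEq] at hw
        obtain ⟨rfl, rfl⟩ := hw
        refine Or.inr (Or.inl ⟨a, rfl, hB a (A.mem_insert_self a), some A, ?_, w', rfl, hw'⟩)
        exact fun b hb => WithBot.coe_lt_coe.mpr (hA b hb)
  · rintro (⟨rfl, rfl, hw⟩ | ⟨a, rfl, hlo, B, hB, w', rfl, hw'⟩ | hw)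
    · exact ⟨none, rfl, w, rfl, hw⟩
    · cases B with
      | none => exact absurd hB WithBot.coe_ne_bot
      | some A =>
        have hA : ∀ b ∈ A, a < b := fun b hb => WithBot.coe_lt_coe.mp (hB b hb)
        refine ⟨some (insert a A), ?_, w', by rw [encAnn_insert hA]; rfl, hw'⟩
        intro b hb
        rcases Finset.mem_insert.mp hb with rfl | hb
        · exact hlo
        · exact hlo.trans (hB b hb)
    · exact ⟨some ∅, by simp [Above], c :: w, by simp [encAnn, encAnnXi], hw⟩

variable (α) in
/-- States of the recognising automaton; `ann lo` is reading an acceptance set whose elements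
read so far are `≤ lo`. -/
inductive State : Type
  | start | ann (lo : WithBot α) | annDone | expectEvent | event (a : α) | afterEvent | final | dead
  deriving Fintype

def step : State α → Letter α → State α
  | .start, .inl (.inr (.inr .lang)) => .ann ⊥
  | .ann lo, .inl (.inr (.inl a)) => if lo < a then .ann a else .dead
  | .ann lo, .inl (.inr (.inr .bullet)) => if lo = ⊥ then .annDone else .dead
  | .ann _, .inl (.inr (.inr .comma)) => .expectEvent
  | .ann _, .inl (.inr (.inr .rang)) => .final
  | .annDone, .inl (.inr (.inr .comma)) => .expectEvent
  | .annDone, .inl (.inr (.inr .rang)) => .final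
  | .expectEvent, .inl (.inl a) => .event a
  | .event a, .inr b => if a = b then .afterEvent else .dead
  | .afterEvent, .inl (.inr (.inr .comma)) => .ann ⊥
  | _, _ => .dead

def StateLang : State α → List (Letter α) → Prop
  | .start, w => ∃ w', w = sym .lang :: w' ∧ AnnRestEnc ⊥ w'
  | .ann lo, w => AnnRestEnc lo w
  | .annDone, w => RestEnc w
  | .expectEvent, w => ∃ a w', w = ev a :: .inr a :: sym .comma :: w' ∧ AnnRestEnc ⊥ w'
  | .event a, w => ∃ w', w = .inr a :: sym .comma :: w' ∧ AnnRestEnc ⊥ w'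
  | .afterEvent, w => ∃ w', w = sym .comma :: w' ∧ AnnRestEnc ⊥ w'
  | .final, w => w = []
  | .dead, _ => False

theorem stateLang_nil (q : State α) : StateLang q [] ↔ q = .final := by
  cases q <;> simp [StateLang, not_restEnc_nil, not_annRestEnc_nil]

theorem stateLang_cons (q : State α) (c : Letter α) (w : List (Letter α)) :
    StateLang q (c :: w) ↔ StateLang (step q c) w := by
  cases q <;> rcases c with (a | a | m) | b <;> try cases m
  all_goals simp [StateLang, step, restEnc_cons, annRestEnc_cons, sym, ev, acc]
  all_goals split_ifs <;> simp_all [eq_comm]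

def dfa : DFA (Letter α) (State α) := ⟨step, .start, {.final}⟩

theorem stateLang_iff_evalFrom (q : State α) (w : List (Letter α)) :
    StateLang q w ↔ dfa.evalFrom q w = .final := by
  induction w generalizing q with
  | nil => exact stateLang_nil q
  | cons c w ih => rw [stateLang_cons, DFA.evalFrom_cons]; exact ih (step q c)

theorem annRestEnc_bot_iff (w : List (Letter α)) :
    AnnRestEnc ⊥ w ↔ ∃ B w', w = encAnn B ++ w' ∧ RestEnc w' := by
  have above_bot : ∀ B : Option (Finset α), Above ⊥ B := by
    rintro (_ | A)
    exacts [rfl, fun b _ => WithBot.bot_lt_coe b]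
  simp [AnnRestEnc, above_bot]

theorem stateLang_start_iff (w : List (Letter α)) :
    StateLang .start w ↔ ∃ x, enc x = w := by
  simp only [StateLang, annRestEnc_bot_iff, RestEnc]
  constructor
  · rintro ⟨_, rfl, B, _, rfl, L, rfl⟩
    exact ⟨(B, L), by simp [enc]⟩
  · rintro ⟨x, rfl⟩
    exact ⟨_, rfl, x.1, _, by simp, x.2, rfl⟩

theorem dfa_accepts : (dfa : DFA (Letter α) (State α)).accepts = Set.range enc := by
  ext w
  change dfa.evalFrom .start w ∈ ({.final} : Set (State α)) ↔ ∃ x, enc x = w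
  rw [Set.mem_singleton_iff, ← stateLang_iff_evalFrom, stateLang_start_iff]

end Automaton

end TracesRational

theorem DFA.exists_nfa_fin_accepts_eq {T σ : Type} [Fintype σ] (M : DFA T σ) :
    ∃ (n : ℕ) (A : NFA T (Fin n)), A.accepts = M.accepts :=
  ⟨_, (M.reindex (Fintype.equivFin σ)).toNFA, by rw [DFA.toNFA_correct, DFA.accepts_reindex]⟩

theorem recognises_of_accepts_eq_range {β γ Q X : Type} {A : NFA (β ⊕ γ) Q}
    {enc : X → List (β ⊕ γ)} (h : A.accepts = Set.range enc) :
    Recognises A fun s t =>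
      ∃ x, (enc x).filterMap Sum.getLeft? = s ∧ (enc x).filterMap Sum.getRight? = t := by
  intro s t
  rw [h]
  constructor
  · rintro ⟨x, rfl, rfl⟩
    exact ⟨enc x, ⟨x, rfl⟩, rfl, rfl⟩
  · rintro ⟨_, ⟨x, rfl⟩, rfl, rfl⟩
    exact ⟨x, rfl, rfl⟩

theorem extLE_take {α : Type} (v : FLObs α) (n : ℕ) : extLE (v.1, v.2.take n) v := by
  refine ⟨Or.inl rfl, List.length_take_le' n v.2, fun i _ _ => ?_⟩
  simp [optExt]

theorem inducedRel_extLE_traceRel_of_prefix {α : Type} {s t : List α} (h : s <+: t) :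
    inducedRel extLE traceRel s t := by
  obtain ⟨u, rfl⟩ := h
  intro v hv
  refine ⟨(v.1, v.2.take s.length), ?_, extLE_take v s.length⟩
  rw [traceRel, List.map_take, ← hv, List.take_left]

theorem stmt7_general {α : Type} [Fintype α] [LinearOrder α] :
    (∃ (n : ℕ) (A : NFA (Xi α ⊕ α) (Fin n)),
      Recognises A (fun s t => ∃ x : FLObs α, s = phi x ∧ traceRel x t)) ∧
    (∀ s t : List α, s <+: t → inducedRel extLE traceRel s t) := by
  refine ⟨?_, fun s t => inducedRel_extLE_traceRel_of_prefix⟩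
  obtain ⟨n, A, hA⟩ := DFA.exists_nfa_fin_accepts_eq (TracesRational.dfa (α := α))
  refine ⟨n, A, ?_⟩
  have h := recognises_of_accepts_eq_range (hA.trans TracesRational.dfa_accepts)
  simp only [TracesRational.filterMap_getLeft_enc, TracesRational.filterMap_getRight_enc] at h
  simpa only [traceRel, eq_comm] using h

/-- The traces model `T` is rational: (a) there is an NFA with finitely many states
over `Ξ ⊕ Σ` recognising `{(φ x, t) : (x, t) ∈ trace_Σ}` (the output encoding `ψ`
being the identity on `Σ*`), and (b) the identity encoding is order-reflecting:
whenever `s` is a prefix of `t` then `s ≼ t` in the relation induced by `trace_Σ`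
from the extension order on `FL_Σ`. -/
theorem stmt7 {α : Type} [Fintype α] [Nonempty α] [LinearOrder α] :
    (∃ (n : ℕ) (A : NFA (Xi α ⊕ α) (Fin n)),
      Recognises A (fun s t => ∃ x : FLObs α, s = phi x ∧ traceRel x t)) ∧
    (∀ s t : List α, s <+: t → inducedRel extLE traceRel s t) :=
  stmt7_general
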